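/- Let a(t) = t^p with 0 < p < 1. Then for the metric g = -dt² + t^{2p}dx² on (0,∞) × ℝ, the curves s ↦ (t(s), x₀) with dt/ds = a(t(s)), i.e. t(s) solving ṫ = t^p, when expressed in the coordinates (τ, v) with τ = t^{p+1}/(p+1) and v = t^{1-p}/(1-p) + x, have velocity a(t)·∂_t = a(t)²·∂_τ + ∂_v, which extends continuously to τ = 0 with limit ∂_v; and in the coordinates (τ, u) with u = t^{1-p}/(1-p) - x, the velocity a(t)²·∂_τ + ∂_u extends continuously to τ = 0 with limit ∂_u. -/

import Mathlib

theorem HasDerivAt.rpow_const_div_self {f : ℝ → ℝ} {f' x q : ℝ} (hf : HasDerivAt f f' x)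
    (hx : 0 < f x) (hq : q ≠ 0) :
    HasDerivAt (fun y => f y ^ q / q) (f' * f x ^ (q - 1)) x := by
  have h := (hf.rpow_const (p := q) (Or.inl hx.ne')).div_const q
  rwa [mul_right_comm, mul_div_cancel_right₀ _ hq] at h

theorem HasDerivAt.rpow_const_div_self_of_hasDerivAt_rpow {t : ℝ → ℝ} {s p q : ℝ}
    (ht : HasDerivAt t (t s ^ p) s) (hs : 0 < t s) (hq : q ≠ 0) :
    HasDerivAt (fun y => t y ^ q / q) (t s ^ (p + q - 1)) s := by
  convert ht.rpow_const_div_self hs hq using 1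
  rw [add_sub_assoc, Real.rpow_add hs]

theorem stmt19 (p : ℝ) (hp0 : 0 < p) (hp1 : p < 1)
    (s₀ s₁ : ℝ) (t : ℝ → ℝ)
    (htpos : ∀ s ∈ Set.Ioo s₀ s₁, 0 < t s)
    (ht' : ∀ s ∈ Set.Ioo s₀ s₁, HasDerivAt t ((t s) ^ p) s)
    (ht0 : Filter.Tendsto t (nhdsWithin s₀ (Set.Ioi s₀)) (nhds 0))
    (x₀ : ℝ) :
    (∀ s ∈ Set.Ioo s₀ s₁,
      HasDerivAt (fun s' : ℝ => (((t s') ^ (p+1)) / (p+1), ((t s') ^ (1-p)) / (1-p) + x₀))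
        (((t s) ^ (2*p), 1)) s) ∧
    (∀ s ∈ Set.Ioo s₀ s₁,
      HasDerivAt (fun s' : ℝ => (((t s') ^ (p+1)) / (p+1), ((t s') ^ (1-p)) / (1-p) - x₀))
        (((t s) ^ (2*p), 1)) s) ∧
    Filter.Tendsto (fun s : ℝ => (((t s) ^ (2*p) : ℝ), (1:ℝ)))
      (nhdsWithin s₀ (Set.Ioi s₀)) (nhds ((0:ℝ), (1:ℝ))) := by
  have hτ : ∀ s ∈ Set.Ioo s₀ s₁,
      HasDerivAt (fun s' => t s' ^ (p + 1) / (p + 1)) (t s ^ (2 * p)) s := fun s hs => by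
    convert (ht' s hs).rpow_const_div_self_of_hasDerivAt_rpow (q := p + 1) (htpos s hs)
      (by linarith) using 2
    ring
  have hv : ∀ s ∈ Set.Ioo s₀ s₁,
      HasDerivAt (fun s' => t s' ^ (1 - p) / (1 - p)) 1 s := fun s hs => by
    convert (ht' s hs).rpow_const_div_self_of_hasDerivAt_rpow (q := 1 - p) (htpos s hs)
      (by linarith) using 1
    rw [add_sub_cancel, sub_self, Real.rpow_zero]
  have hlim : Filter.Tendsto (fun s => t s ^ (2 * p)) (nhdsWithin s₀ (Set.Ioi s₀)) (nhds 0) := by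
    simpa [Real.zero_rpow (by positivity : 2 * p ≠ 0)] using
      ht0.rpow_const (Or.inr (by positivity : 0 ≤ 2 * p))
  exact ⟨fun s hs => (hτ s hs).prodMk ((hv s hs).add_const x₀),
    fun s hs => (hτ s hs).prodMk ((hv s hs).sub_const x₀),
    hlim.prodMk_nhds tendsto_const_nhds⟩
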